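/- arXiv:1604.06833 — 5 statements merged into one kernel-verified Lean document; each statement's English description precedes it below -/
import Mathlib

section
/- For every odd integer r ≥ 3, every ε ∈ (0,1), every d ∈ [0,1], and every graph G on n vertices with n ≥ 2/(ε - ε²): if G is (ε,d)-dense (i.e., every vertex subset X with |X| ≥ εn spans at least (d/2)|X|² edges), then the number of closed walks of length r in G (sequences (x₁,...,x_r) with x₁x₂, x₂x₃, ..., x_rx₁ all edges) is at least (d^r - ε)·n^r. -/
open Finset
open scoped Classical

/-- Number of edges of `G` spanned by the vertex set `X`. -/
noncomputable def edgesIn {V : Type*} [Fintype V] (G : SimpleGraph V) (X : Finset V) : ℕ :=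
  (G.edgeFinset.filter (fun e => ∀ v ∈ e, v ∈ X)).card

/-- `G` is `(ε, d)`-dense: every vertex set `X` with `|X| ≥ ε n` spans at least
`(d/2)|X|²` edges. -/
def IsEpsDense {V : Type*} [Fintype V] (G : SimpleGraph V) (ε d : ℝ) : Prop :=
  ∀ X : Finset V, ε * (Fintype.card V : ℝ) ≤ (X.card : ℝ) →
    d / 2 * (X.card : ℝ) ^ 2 ≤ (edgesIn G X : ℝ)

/-- The number of closed walks of length `r` in `G`, i.e. of sequences
`(x₁, …, x_r)` with all consecutive pairs (cyclically) adjacent. -/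
noncomputable def closedWalkCount {V : Type*} [Fintype V] (G : SimpleGraph V) (r : ℕ) : ℕ :=
  (Finset.univ.filter (fun x : Fin r → V => ∀ i, G.Adj (x i) (x (finRotate r i)))).card

/-- The number of walks of length `m` from `x` to `y` in `G`. -/
noncomputable def walkCount {V : Type*} [Fintype V] (G : SimpleGraph V) (m : ℕ) (x y : V) : ℕ :=
  (Finset.univ.filter (fun a : Fin (m + 1) → V =>
    a 0 = x ∧ a (Fin.last m) = y ∧ ∀ i : Fin m, G.Adj (a i.castSucc) (a i.succ))).card

/-- The number of homomorphisms from the path with `k` edges into `G`. -/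
noncomputable def pathHomCount {V : Type*} [Fintype V] (G : SimpleGraph V) (k : ℕ) : ℕ :=
  (Finset.univ.filter (fun a : Fin (k + 1) → V =>
    ∀ i : Fin k, G.Adj (a i.castSucc) (a i.succ))).card

/-- `∑_{xy ∈ E(G)} f(x) f(y)`, summed over unordered edges. -/
noncomputable def edgeSum {V : Type*} [Fintype V] (G : SimpleGraph V) (f : V → ℝ) : ℝ :=
  ∑ e ∈ G.edgeFinset, Sym2.lift ⟨fun x y => f x * f y, fun x y => mul_comm _ _⟩ e

/-!
Let `A` be the adjacency matrix, so that `W k = 𝟙 ⬝ᵥ Aᵏ 𝟙` counts walks of length `k` and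
`C_r = tr Aʳ`. Padding small sets up to size `⌈εn⌉` shows `1_X ⬝ᵥ A 1_X ≥ d|X|² - κn²` for every
`X`, with `κ = (1 - d)(ε + 1/n)²`. As `A` has zero diagonal, `f ⬝ᵥ A f` is affine in each
coordinate of `f`, so rounding coordinates to `0` or `M` one at a time extends this to
`f ⬝ᵥ A f ≥ d(∑ f)² - κn²M²` for all `0 ≤ f ≤ M`. With `f = Aʲ𝟙` this gives
`W (2j+1) ≥ d W(j)² - κn^{2j+2}`, and Cauchy–Schwarz gives `n W(2j) ≥ W(j)²`; by induction
`W k ≥ (dᵏ - kκ) nᵏ⁺¹`. For `r = 2m + 1` we have `tr Aʳ = ∑_z (Aᵐ e_z) ⬝ᵥ A (Aᵐ e_z)`, and the same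
two inequalities give `C_r ≥ (dʳ - rκ) nʳ`. Finally, `dʳ > ε` forces `r(1 - d)ε ≤ e⁻¹`, so `rκ ≤ ε`.
-/

open Matrix Real

/-- The left side is convex in `t` and the right side affine, so the inequality at `t = 0` and
`t = M` interpolates. -/
theorem mul_sq_sub_le_of_endpoints {d C S q L M t : ℝ} (hd : 0 ≤ d) (ht0 : 0 ≤ t) (htM : t ≤ M)
    (h0 : d * S ^ 2 - C ≤ q) (hM : d * (S + M) ^ 2 - C ≤ q + M * L) :
    d * (S + t) ^ 2 - C ≤ q + t * L := by
  obtain rfl | hMpos := (ht0.trans htM).eq_or_lt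
  · obtain rfl : t = 0 := le_antisymm htM ht0
    simpa using h0
  refine le_of_mul_le_mul_left ?_ hMpos
  nlinarith [mul_le_mul_of_nonneg_left h0 (sub_nonneg.2 htM), mul_le_mul_of_nonneg_left hM ht0,
    mul_nonneg (mul_nonneg (mul_nonneg hd ht0) (sub_nonneg.2 htM)) hMpos.le]

theorem sub_two_mul_mul_sq_le_sq {D a P W : ℝ} (hD0 : 0 ≤ D) (hD1 : D ≤ 1) (ha : 0 ≤ a)
    (hP : 0 ≤ P) (h : (D - a) * P ≤ W) : (D ^ 2 - 2 * a) * P ^ 2 ≤ W ^ 2 := by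
  rcases le_or_gt D a with hDa | hDa
  · have : D ^ 2 - 2 * a ≤ 0 := by nlinarith
    nlinarith [mul_nonpos_of_nonpos_of_nonneg this (sq_nonneg P), sq_nonneg W]
  · have hsq := pow_le_pow_left₀ (mul_nonneg (sub_nonneg.2 hDa.le) hP) h 2
    nlinarith [mul_le_mul_of_nonneg_left hD1 ha, sq_nonneg P, mul_nonneg ha (sq_nonneg P),
      mul_le_mul_of_nonneg_right (mul_le_mul_of_nonneg_left hD1 ha) (sq_nonneg P)]

theorem pow_two_mul_add_one_sub_mul_le {d κ P W X : ℝ} {j : ℕ} (hd0 : 0 ≤ d) (hd1 : d ≤ 1)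
    (hκ : 0 ≤ κ) (hP : 0 ≤ P)
    (hW : (d ^ j - j * κ) * P ≤ W) (hX : d * W ^ 2 - κ * P ^ 2 ≤ X) :
    (d ^ (2 * j + 1) - (2 * j + 1 : ℕ) * κ) * P ^ 2 ≤ X := by
  have hsq := sub_two_mul_mul_sq_le_sq (pow_nonneg hd0 j) (pow_le_one₀ hd0 hd1)
    (by positivity) hP hW
  have : 0 ≤ (j : ℝ) * κ * P ^ 2 := by positivity
  push_cast
  rw [pow_succ, pow_mul']
  nlinarith [mul_le_mul_of_nonneg_left hsq hd0]

theorem mul_one_sub_mul_le_exp_neg_one {d ε : ℝ} {r : ℕ} (hd0 : 0 ≤ d) (hd1 : d ≤ 1)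
    (h : ε < d ^ r) : r * (1 - d) * ε ≤ exp (-1) := by
  set x := r * (1 - d)
  have hx : 0 ≤ x := mul_nonneg r.cast_nonneg (sub_nonneg.2 hd1)
  have hdr : d ^ r ≤ exp (-x) := by
    calc d ^ r ≤ exp (d - 1) ^ r := pow_le_pow_left₀ hd0 (by linarith [add_one_le_exp (d - 1)]) r
      _ = exp (-x) := by rw [← exp_nat_mul]; congr 1; ring
  calc x * ε ≤ x * exp (-x) := mul_le_mul_of_nonneg_left (h.le.trans hdr) hx
    _ ≤ exp (x - 1) * exp (-x) :=
        mul_le_mul_of_nonneg_right (by linarith [add_one_le_exp (x - 1)]) (exp_pos _).le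
    _ = exp (-1) := by rw [← exp_add]; congr 1; ring

theorem mul_one_sub_mul_add_sq_le {d ε δ : ℝ} {r : ℕ} (hd0 : 0 ≤ d) (hd1 : d ≤ 1) (hε : 0 < ε)
    (hδ0 : 0 ≤ δ) (hδ : δ ≤ ε / 2) (h : ε < d ^ r) : r * ((1 - d) * (ε + δ) ^ 2) ≤ ε := by
  have hx : 0 ≤ r * (1 - d) := mul_nonneg r.cast_nonneg (sub_nonneg.2 hd1)
  have hexp : exp (-1) ≤ 4 / 9 := by
    rw [exp_neg, inv_le_comm₀ (exp_pos 1) (by norm_num)]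
    linarith [exp_one_gt_d9]
  have hεδ : (ε + δ) ^ 2 ≤ 9 / 4 * ε ^ 2 := by nlinarith
  calc r * ((1 - d) * (ε + δ) ^ 2) ≤ r * (1 - d) * (9 / 4 * ε ^ 2) := by
        rw [← mul_assoc]; exact mul_le_mul_of_nonneg_left hεδ hx
    _ = 9 / 4 * ε * (r * (1 - d) * ε) := by ring
    _ ≤ 9 / 4 * ε * (4 / 9) := mul_le_mul_of_nonneg_left
        ((mul_one_sub_mul_le_exp_neg_one hd0 hd1 h).trans hexp) (by positivity)
    _ = ε := by ring

namespace Matrix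

theorem sum_sum_sub_sum_sum_le {V : Type*} {A : Matrix V V ℝ} (h1 : ∀ i j, A i j ≤ 1)
    {X Y : Finset V} (hXY : X ⊆ Y) :
    ∑ u ∈ Y, ∑ v ∈ Y, A u v - ∑ u ∈ X, ∑ v ∈ X, A u v ≤ (#Y : ℝ) ^ 2 - (#X : ℝ) ^ 2 := by
  have hsub := product_subset_product hXY hXY
  rw [← sum_product' (f := A), ← sum_product' (f := A), ← sum_sdiff hsub, add_sub_cancel_right]
  calc _ ≤ #(Y ×ˢ Y \ X ×ˢ X) • (1 : ℝ) := sum_le_card_nsmul _ _ _ fun p _ => h1 p.1 p.2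
    _ = _ := by
      rw [card_sdiff_of_subset hsub, card_product, card_product, nsmul_one,
        Nat.cast_sub (Nat.mul_le_mul (card_le_card hXY) (card_le_card hXY))]
      push_cast
      ring

/-- For an adjacency matrix the double sum is `2 e(X)`, so this is the condition of `IsEpsDense`
imposed on all sets `X`, up to the additive error `c`. -/
def IsDenseUpTo {V : Type*} (A : Matrix V V ℝ) (d c : ℝ) : Prop :=
  ∀ X : Finset V, d * (#X : ℝ) ^ 2 - c ≤ ∑ u ∈ X, ∑ v ∈ X, A u v

variable {V : Type*} [Fintype V]

theorem trace_pow_mul_eq_sum {R : Type*} [CommSemiring R] [DecidableEq V] (M : Matrix V V R)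
    (k : ℕ) (N : Matrix V V R) :
    trace (M ^ k * N) = ∑ a : Fin (k + 1) → V,
      (∏ i : Fin k, M (a i.castSucc) (a i.succ)) * N (a (Fin.last k)) (a 0) := by
  induction k generalizing N with
  | zero =>
    rw [← (Equiv.funUnique (Fin 1) V).symm.sum_comp]
    simp [trace]
  | succ k ih =>
    rw [pow_succ', mul_assoc, trace_mul_comm, mul_assoc, ih,
      ← (Fin.consEquiv fun _ : Fin (k + 2) => V).sum_comp, Fintype.sum_prod_type, sum_comm]
    refine sum_congr rfl fun t _ => ?_
    simp only [Fin.consEquiv_apply, Fin.prod_univ_succ, Fin.cons_zero, Fin.cons_succ, mul_apply,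
      mul_sum, ← Fin.succ_castSucc, Fin.castSucc_zero, ← Fin.succ_last]
    refine sum_congr rfl fun x _ => ?_
    ring

theorem trace_pow_succ_eq_sum {R : Type*} [CommSemiring R] [DecidableEq V] (M : Matrix V V R)
    (k : ℕ) :
    trace (M ^ (k + 1)) = ∑ a : Fin (k + 1) → V, ∏ i, M (a i) (a (finRotate (k + 1) i)) := by
  rw [pow_succ, trace_pow_mul_eq_sum]
  refine sum_congr rfl fun a _ => ?_
  simp [Fin.prod_univ_castSucc, Fin.coeSucc_eq_succ]

theorem IsSymm.dotProduct_pow_mul_mul_pow_mulVec {R : Type*} [CommSemiring R] [DecidableEq V]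
    {A : Matrix V V R} (hA : A.IsSymm) (j : ℕ) (B : Matrix V V R) (x : V → R) :
    x ⬝ᵥ (A ^ j * B * A ^ j) *ᵥ x = (A ^ j *ᵥ x) ⬝ᵥ B *ᵥ (A ^ j *ᵥ x) := by
  rw [← mulVec_mulVec, ← mulVec_mulVec, dotProduct_mulVec, ← mulVec_transpose, (hA.pow j).eq]

theorem IsSymm.sum_pow_two_mul_mulVec_one {R : Type*} [CommSemiring R] [DecidableEq V]
    {A : Matrix V V R} (hA : A.IsSymm) (j : ℕ) :
    ∑ i, (A ^ (2 * j) *ᵥ 1) i = ∑ i, (A ^ j *ᵥ 1) i ^ 2 := by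
  rw [← one_dotProduct, show A ^ (2 * j) = A ^ j * 1 * A ^ j by rw [mul_one, ← pow_add, two_mul],
    hA.dotProduct_pow_mul_mul_pow_mulVec, one_mulVec]
  simp [dotProduct, sq]

theorem IsSymm.sum_pow_two_mul_add_one_mulVec_one {R : Type*} [CommSemiring R] [DecidableEq V]
    {A : Matrix V V R} (hA : A.IsSymm) (j : ℕ) :
    ∑ i, (A ^ (2 * j + 1) *ᵥ 1) i = (A ^ j *ᵥ 1) ⬝ᵥ A *ᵥ (A ^ j *ᵥ 1) := by
  rw [← one_dotProduct, show A ^ (2 * j + 1) = A ^ j * A * A ^ j by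
    rw [← pow_succ, ← pow_add]; ring_nf, hA.dotProduct_pow_mul_mul_pow_mulVec]

theorem IsSymm.trace_pow_two_mul_add_one {R : Type*} [CommSemiring R] [DecidableEq V]
    {A : Matrix V V R} (hA : A.IsSymm) (m : ℕ) :
    trace (A ^ (2 * m + 1)) = ∑ z, (A ^ m).col z ⬝ᵥ A *ᵥ (A ^ m).col z := by
  rw [trace, show A ^ (2 * m + 1) = A ^ m * A * A ^ m by rw [← pow_succ, ← pow_add]; ring_nf]
  refine sum_congr rfl fun z _ => ?_
  rw [← mulVec_single_one, ← hA.dotProduct_pow_mul_mul_pow_mulVec]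
  simp

theorem add_single_dotProduct_mulVec_add_single {R : Type*} [CommSemiring R] [DecidableEq V]
    {A : Matrix V V R} {v : V} (hv : A v v = 0) (f : V → R) (t : R) :
    (f + Pi.single v t) ⬝ᵥ A *ᵥ (f + Pi.single v t) =
      f ⬝ᵥ A *ᵥ f + t * ((A *ᵥ f) v + (f ᵥ* A) v) := by
  simp only [dotProduct_mulVec, add_vecMul, dotProduct_add, add_dotProduct, dotProduct_single,
    single_vecMul]
  simp only [smul_dotProduct, smul_eq_mul, Pi.add_apply, Pi.smul_apply, row_apply, hv, mul_zero,
    add_zero, mulVec_apply]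
  ring

variable {A : Matrix V V ℝ}

theorem pow_mulVec_one_nonneg [DecidableEq V] (h0 : ∀ i j, 0 ≤ A i j) (k : ℕ) (i : V) :
    0 ≤ (A ^ k *ᵥ 1) i :=
  sum_nonneg fun j _ => mul_nonneg (pow_apply_nonneg h0 k i j) zero_le_one

theorem pow_mulVec_one_le [DecidableEq V] (h0 : ∀ i j, 0 ≤ A i j) (h1 : ∀ i j, A i j ≤ 1)
    (k : ℕ) (i : V) : (A ^ k *ᵥ 1) i ≤ (Fintype.card V : ℝ) ^ k := by
  induction k generalizing i with
  | zero => simp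
  | succ k ih =>
    calc (A ^ (k + 1) *ᵥ 1) i = ∑ j, A i j * (A ^ k *ᵥ 1) j := by
          rw [pow_succ', ← mulVec_mulVec]; rfl
      _ ≤ ∑ _j : V, (Fintype.card V : ℝ) ^ k := sum_le_sum fun j _ =>
          (mul_le_of_le_one_left (pow_mulVec_one_nonneg h0 k j) (h1 i j)).trans (ih j)
      _ = (Fintype.card V : ℝ) ^ (k + 1) := by simp [pow_succ, mul_comm]

theorem pow_succ_apply_le [DecidableEq V] (h0 : ∀ i j, 0 ≤ A i j) (h1 : ∀ i j, A i j ≤ 1)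
    (k : ℕ) (i j : V) : (A ^ (k + 1)) i j ≤ (Fintype.card V : ℝ) ^ k := by
  refine le_trans ?_ (pow_mulVec_one_le h0 h1 k i)
  rw [pow_succ, mul_apply, mulVec, dotProduct]
  exact sum_le_sum fun l _ => by
    simpa using mul_le_of_le_one_right (pow_apply_nonneg h0 k i l) (h1 l j)

theorem indicator_dotProduct_mulVec_indicator [DecidableEq V] (X : Finset V) (M : ℝ) :
    (fun v => if v ∈ X then M else 0) ⬝ᵥ A *ᵥ (fun v => if v ∈ X then M else 0) =
      M ^ 2 * ∑ u ∈ X, ∑ v ∈ X, A u v := by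
  simp only [dotProduct, mulVec, mul_ite, mul_zero, sum_ite_mem, univ_inter, mul_sum, ite_mul,
    zero_mul, sum_ite_irrel, sum_const_zero]
  exact sum_congr rfl fun _ _ => sum_congr rfl fun _ _ => by ring

theorem IsDenseUpTo.le_dotProduct_mulVec [DecidableEq V] {d c M : ℝ} (hA : A.IsDenseUpTo d c)
    (hdiag : ∀ v, A v v = 0) (hd : 0 ≤ d) {f : V → ℝ} (hf0 : ∀ v, 0 ≤ f v)
    (hfM : ∀ v, f v ≤ M) : d * (∑ v, f v) ^ 2 - c * M ^ 2 ≤ f ⬝ᵥ A *ᵥ f := by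
  -- induction on the set `s` of coordinates allowed to lie strictly between `0` and `M`
  suffices key : ∀ s : Finset V, ∀ f : V → ℝ, (∀ v, 0 ≤ f v) → (∀ v, f v ≤ M) →
      (∀ v ∉ s, f v = 0 ∨ f v = M) → d * (∑ v, f v) ^ 2 - c * M ^ 2 ≤ f ⬝ᵥ A *ᵥ f from
    key univ f hf0 hfM (by simp)
  intro s
  induction s using Finset.induction_on with
  | empty =>
    intro f _ _ hf
    set X := univ.filter (f · = M)
    have hfX : f = fun v => if v ∈ X then M else 0 := by
      ext v
      rcases hf v (notMem_empty v) with h | h <;> by_cases hv : f v = M <;> simp_all [X]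
    have hsum : ∑ v, f v = M * #X := by simp [hfX, sum_ite_mem, mul_comm]
    rw [hsum, hfX, indicator_dotProduct_mulVec_indicator]
    nlinarith [mul_le_mul_of_nonneg_left (hA X) (sq_nonneg M)]
  | insert v s hv ih =>
    intro f hf0 hfM hf
    set f₀ := Function.update f v 0
    have hupd : ∀ t, Function.update f v t = f₀ + Pi.single v t := by
      intro t; ext w; by_cases hw : w = v <;> simp [f₀, hw]
    have hsum : ∀ t, ∑ w, Function.update f v t w = ∑ w, f₀ w + t := by
      simp [hupd, sum_add_distrib]
    have hform : ∀ t, Function.update f v t ⬝ᵥ A *ᵥ Function.update f v t =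
        f₀ ⬝ᵥ A *ᵥ f₀ + t * ((A *ᵥ f₀) v + (f₀ ᵥ* A) v) := by
      simp [hupd, add_single_dotProduct_mulVec_add_single (hdiag v)]
    have hend : ∀ t, (t = 0 ∨ t = M) → 0 ≤ t → t ≤ M →
        d * (∑ w, f₀ w + t) ^ 2 - c * M ^ 2 ≤ f₀ ⬝ᵥ A *ᵥ f₀ + t * ((A *ᵥ f₀) v + (f₀ ᵥ* A) v) := by
      intro t ht ht0 htM
      rw [← hsum, ← hform]
      apply ih <;> intro w <;> by_cases hw : w = v <;> simp_all
    have h := mul_sq_sub_le_of_endpoints hd (hf0 v) (hfM v)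
      (by simpa using hend 0 (.inl rfl) le_rfl (hf0 v |>.trans (hfM v)))
      (hend M (.inr rfl) (hf0 v |>.trans (hfM v)) le_rfl)
    rwa [← hsum, ← hform, Function.update_eq_self] at h

end Matrix

namespace SimpleGraph

theorem adjMatrix_nonneg {V : Type*} (G : SimpleGraph V) (i j : V) : 0 ≤ G.adjMatrix ℝ i j := by
  rw [adjMatrix_apply]; split_ifs <;> norm_num

theorem adjMatrix_le_one {V : Type*} (G : SimpleGraph V) (i j : V) : G.adjMatrix ℝ i j ≤ 1 := by
  rw [adjMatrix_apply]; split_ifs <;> norm_num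

variable {V : Type*} [Fintype V] (G : SimpleGraph V)

theorem closedWalkCount_succ_eq_trace (k : ℕ) :
    (closedWalkCount G (k + 1) : ℝ) = trace (G.adjMatrix ℝ ^ (k + 1)) := by
  rw [trace_pow_succ_eq_sum, closedWalkCount, natCast_card_filter]
  simp only [adjMatrix_apply, prod_boole, mem_univ, true_imp_iff]

theorem card_filter_adj_product_eq_two_mul_edgesIn (X : Finset V) :
    #((X ×ˢ X).filter fun p => G.Adj p.1 p.2) = 2 * edgesIn G X := by
  -- the handshake identity `two_mul_card_edgeFinset` for the restriction of `G` to `X`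
  let H : SimpleGraph V := SimpleGraph.fromRel fun u v => G.Adj u v ∧ u ∈ X ∧ v ∈ X
  have hH : ∀ u v, H.Adj u v ↔ G.Adj u v ∧ u ∈ X ∧ v ∈ X := by
    intro u v
    simp only [H, fromRel_adj]
    constructor
    · rintro ⟨-, h | ⟨h, hv, hu⟩⟩
      exacts [h, ⟨h.symm, hu, hv⟩]
    · intro h; exact ⟨h.1.ne, Or.inl h⟩
  rw [edgesIn, ← show H.edgeFinset = G.edgeFinset.filter (fun e => ∀ v ∈ e, v ∈ X) from ?_,
    two_mul_card_edgeFinset]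
  · congr 1
    ext ⟨u, v⟩
    simp [hH, and_comm, and_assoc]
  · ext e
    induction e using Sym2.ind
    simp [hH, and_comm]

theorem sum_sum_adjMatrix_eq_two_mul_edgesIn (X : Finset V) :
    ∑ u ∈ X, ∑ v ∈ X, G.adjMatrix ℝ u v = 2 * (edgesIn G X : ℝ) := by
  rw [← Nat.cast_ofNat, ← Nat.cast_mul, ← card_filter_adj_product_eq_two_mul_edgesIn,
    natCast_card_filter, sum_product]
  simp only [adjMatrix_apply]

theorem isDenseUpTo_of_isEpsDense {ε d : ℝ} (hε1 : ε ≤ 1) (hd1 : d ≤ 1) (hG : IsEpsDense G ε d) :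
    (G.adjMatrix ℝ).IsDenseUpTo d ((1 - d) * (ε * Fintype.card V + 1) ^ 2) := by
  intro X
  set N : ℝ := (Fintype.card V : ℝ)
  obtain ⟨Y, hXY, hYε, hY⟩ : ∃ Y, X ⊆ Y ∧ ε * N ≤ #Y ∧ (#Y = #X ∨ (#Y : ℝ) ≤ ε * N + 1) := by
    by_cases hX : ε * N ≤ #X
    · exact ⟨X, subset_rfl, hX, .inl rfl⟩
    have hXt : #X ≤ ⌈ε * N⌉₊ := by exact_mod_cast (not_le.1 hX).le.trans (Nat.le_ceil _)
    have htN : ⌈ε * N⌉₊ ≤ Fintype.card V :=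
      Nat.ceil_le.2 (by simpa using mul_le_of_le_one_left (Nat.cast_nonneg _) hε1)
    obtain ⟨Y, hXY, hY⟩ := exists_superset_card_eq hXt htN
    refine ⟨Y, hXY, hY ▸ Nat.le_ceil _, .inr ?_⟩
    rw [hY]
    exact (Nat.ceil_lt_add_one ((Nat.cast_nonneg _).trans (not_le.1 hX).le)).le
  have hYsum := (hG Y hYε).trans_eq (by rw [sum_sum_adjMatrix_eq_two_mul_edgesIn]; ring :
    (edgesIn G Y : ℝ) = (∑ u ∈ Y, ∑ v ∈ Y, G.adjMatrix ℝ u v) / 2)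
  have hdiff := (G.adjMatrix ℝ).sum_sum_sub_sum_sum_le (G.adjMatrix_le_one) hXY
  have hXY' : (#X : ℝ) ≤ #Y := by exact_mod_cast card_le_card hXY
  rcases hY with hY | hY
  · rw [hY] at hdiff hYsum; nlinarith [sq_nonneg (ε * N + 1)]
  · have hY2 := pow_le_pow_left₀ (Nat.cast_nonneg _) hY 2
    nlinarith [mul_le_mul_of_nonneg_left hY2 (sub_nonneg.2 hd1),
      mul_nonneg (sub_nonneg.2 hd1) (sq_nonneg (#X : ℝ))]

variable {G} {d κ : ℝ}

theorem le_sum_adjMatrix_pow_mulVec_one [Nonempty V]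
    (hA : (G.adjMatrix ℝ).IsDenseUpTo d (κ * Fintype.card V ^ 2)) (hd0 : 0 ≤ d) (hd1 : d ≤ 1)
    (hκ : 0 ≤ κ) (k : ℕ) :
    (d ^ k - k * κ) * (Fintype.card V : ℝ) ^ (k + 1) ≤ ∑ i, (G.adjMatrix ℝ ^ k *ᵥ 1) i := by
  set N : ℝ := (Fintype.card V : ℝ)
  have hN : 0 < N := by positivity
  induction k using Nat.strong_induction_on with
  | _ k ih =>
  obtain ⟨j, rfl | rfl⟩ := Nat.even_or_odd' k
  · rcases j.eq_zero_or_pos with rfl | hj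
    · simp [N]
    have hsq := sub_two_mul_mul_sq_le_sq (pow_nonneg hd0 j) (pow_le_one₀ hd0 hd1)
      (by positivity) (by positivity) (ih j (by omega))
    have hCS : (∑ i, (G.adjMatrix ℝ ^ j *ᵥ 1) i) ^ 2 ≤
        N * ∑ i, (G.adjMatrix ℝ ^ (2 * j) *ᵥ 1) i := by
      rw [G.isSymm_adjMatrix.sum_pow_two_mul_mulVec_one]
      simpa using sq_sum_le_card_mul_sum_sq (s := univ) (f := G.adjMatrix ℝ ^ j *ᵥ 1)
    refine le_of_mul_le_mul_left ?_ hN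
    calc N * ((d ^ (2 * j) - ↑(2 * j) * κ) * N ^ (2 * j + 1))
        = ((d ^ j) ^ 2 - 2 * (j * κ)) * (N ^ (j + 1)) ^ 2 := by push_cast; ring
      _ ≤ _ := hsq.trans hCS
  · have hQ := hA.le_dotProduct_mulVec (fun v => by simp) hd0
      (pow_mulVec_one_nonneg G.adjMatrix_nonneg j)
      (pow_mulVec_one_le G.adjMatrix_nonneg G.adjMatrix_le_one j)
    rw [G.isSymm_adjMatrix.sum_pow_two_mul_add_one_mulVec_one]
    calc (d ^ (2 * j + 1) - ↑(2 * j + 1) * κ) * N ^ (2 * j + 1 + 1)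
        = (d ^ (2 * j + 1) - ↑(2 * j + 1) * κ) * (N ^ (j + 1)) ^ 2 := by ring
      _ ≤ _ := pow_two_mul_add_one_sub_mul_le hd0 hd1 hκ (by positivity) (ih j (by omega))
          (by rwa [show κ * (N ^ (j + 1)) ^ 2 = κ * N ^ 2 * (N ^ j) ^ 2 by ring])

theorem le_closedWalkCount [Nonempty V]
    (hA : (G.adjMatrix ℝ).IsDenseUpTo d (κ * Fintype.card V ^ 2)) (hd0 : 0 ≤ d) (hd1 : d ≤ 1)
    (hκ : 0 ≤ κ) {r : ℕ} (hr : Odd r) (hr3 : 3 ≤ r) :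
    (d ^ r - r * κ) * (Fintype.card V : ℝ) ^ r ≤ closedWalkCount G r := by
  set N : ℝ := (Fintype.card V : ℝ)
  have hN : 0 < N := by positivity
  obtain ⟨m, rfl⟩ := hr
  obtain ⟨s, rfl⟩ : ∃ s, m = s + 1 := ⟨m - 1, by omega⟩
  set F := G.adjMatrix ℝ ^ (s + 1) *ᵥ 1
  set col := (G.adjMatrix ℝ ^ (s + 1)).col
  have htrace : (closedWalkCount G (2 * (s + 1) + 1) : ℝ) =
      ∑ z, col z ⬝ᵥ G.adjMatrix ℝ *ᵥ col z := by
    rw [closedWalkCount_succ_eq_trace, G.isSymm_adjMatrix.trace_pow_two_mul_add_one]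
  have hper : ∀ z, d * F z ^ 2 - κ * N ^ 2 * (N ^ s) ^ 2 ≤ col z ⬝ᵥ G.adjMatrix ℝ *ᵥ col z := by
    intro z
    have hcol : ∑ y, col z y = F z := by
      simp [col, F, mulVec, dotProduct, (G.isSymm_adjMatrix.pow (s + 1)).apply]
    rw [← hcol]
    exact hA.le_dotProduct_mulVec (fun v => by simp) hd0
      (fun y => pow_apply_nonneg G.adjMatrix_nonneg _ y z)
      (fun y => pow_succ_apply_le G.adjMatrix_nonneg G.adjMatrix_le_one s y z)
  have hCS : (∑ z, F z) ^ 2 ≤ N * ∑ z, F z ^ 2 := by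
    simpa using sq_sum_le_card_mul_sum_sq (s := univ) (f := F)
  have hsum : d * (∑ z, F z) ^ 2 - κ * (N ^ (s + 1 + 1)) ^ 2 ≤
      N * closedWalkCount G (2 * (s + 1) + 1) := by
    have h := sum_le_sum fun z (_ : z ∈ univ) => hper z
    rw [sum_sub_distrib, ← mul_sum, sum_const, card_univ, nsmul_eq_mul, ← htrace] at h
    have hpow : (N ^ (s + 1 + 1)) ^ 2 = N * (N * (N ^ 2 * (N ^ s) ^ 2)) := by ring
    rw [hpow]
    nlinarith [mul_le_mul_of_nonneg_left hCS hd0, mul_le_mul_of_nonneg_left h hN.le]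
  refine le_of_mul_le_mul_left ?_ hN
  calc N * ((d ^ (2 * (s + 1) + 1) - ↑(2 * (s + 1) + 1) * κ) * N ^ (2 * (s + 1) + 1))
      = (d ^ (2 * (s + 1) + 1) - ↑(2 * (s + 1) + 1) * κ) * (N ^ (s + 1 + 1)) ^ 2 := by ring
    _ ≤ _ := pow_two_mul_add_one_sub_mul_le hd0 hd1 hκ (by positivity)
        (le_sum_adjMatrix_pow_mulVec_one hA hd0 hd1 hκ (s + 1)) hsum

end SimpleGraph

theorem odd_cycle_count {V : Type*} [Fintype V] (G : SimpleGraph V) (r : ℕ)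
    (hr : Odd r) (hr3 : 3 ≤ r) (ε d : ℝ) (hε : 0 < ε) (hε1 : ε < 1)
    (hd0 : 0 ≤ d) (hd1 : d ≤ 1)
    (hn : 2 / (ε - ε ^ 2) ≤ (Fintype.card V : ℝ))
    (hG : IsEpsDense G ε d) :
    (d ^ r - ε) * (Fintype.card V : ℝ) ^ r ≤ (closedWalkCount G r : ℝ) := by
  set N : ℝ := (Fintype.card V : ℝ)
  have hεε : 0 < ε - ε ^ 2 := by nlinarith
  have hN : 0 < N := (div_pos two_pos hεε).trans_le hn
  have : Nonempty V := Fintype.card_pos_iff.mp (Nat.cast_pos.mp hN)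
  rcases le_or_gt (d ^ r) ε with hdr | hdr
  · exact (mul_nonpos_of_nonpos_of_nonneg (sub_nonpos.2 hdr) (by positivity)).trans
      (Nat.cast_nonneg _)
  have hδ : 1 / N ≤ ε / 2 := by
    rw [div_le_iff₀ hN]
    rw [div_le_iff₀ hεε] at hn
    nlinarith
  set κ := (1 - d) * (ε + 1 / N) ^ 2
  have hA : (G.adjMatrix ℝ).IsDenseUpTo d (κ * N ^ 2) := by
    convert G.isDenseUpTo_of_isEpsDense hε1.le hd1 hG using 1
    simp only [κ, N]
    field_simp
  calc (d ^ r - ε) * N ^ r ≤ (d ^ r - r * κ) * N ^ r := by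
        gcongr
        exact mul_one_sub_mul_add_sq_le hd0 hd1 hε (by positivity) hδ hdr
    _ ≤ closedWalkCount G r :=
        SimpleGraph.le_closedWalkCount hA hd0 hd1 (by positivity) hr hr3
end

section
/- Let G be an (ε,d)-dense graph on n vertices. Then for every function f : V(G) → [0,1] with ∑_{x ∈ V(G)} f(x) ≥ εn, we have ∑_{xy ∈ E(G)} f(x)f(y) ≥ (d/2)(∑_{x ∈ V(G)} f(x))² − n. -/
open Finset
open scoped Classical

/-!
Since `G` has no loops, `edgeSum G f` is affine in each coordinate of `f`, and along a direction
`e_y - e_x` it is a concave quadratic with linear coefficient `(A f) y - (A f) x`, where `A` is the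
adjacency matrix. So moving weight from `x` to `y` when `(A f) y ≤ (A f) x` keeps `∑ f` and does
not increase `edgeSum G f`; pushing as far as `[0, 1]` allows makes `x` or `y` integral. Repeating,
we may assume `f` has at most one fractional value. Then `Y = {f > 0}` has `|Y| ≥ ∑ f ≥ εn`, and
the edges inside `Y` are those inside `{f = 1}` (at most `edgeSum G f` of them) together with the
fewer than `n` edges at the fractional vertex; density of `Y` gives the bound.
-/

open Matrix

namespace SimpleGraph

variable {V : Type*} [Fintype V] (G : SimpleGraph V)

theorem sum_darts_edge_eq_two_nsmul {M : Type*} [AddCommMonoid M] (g : Sym2 V → M) :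
    ∑ d : G.Dart, g d.edge = 2 • ∑ e ∈ G.edgeFinset, g e := by
  rw [← sum_fiberwise_of_maps_to (g := Dart.edge) (t := G.edgeFinset) (by simp), smul_sum]
  refine sum_congr rfl fun e he => ?_
  rw [sum_congr rfl fun d hd => congrArg g (mem_filter.1 hd).2, sum_const,
    G.dart_edge_fiber_card e (mem_edgeFinset.1 he)]

theorem sum_darts_eq_sum_sum_ite_adj {M : Type*} [AddCommMonoid M] (g : V → V → M) :
    ∑ d : G.Dart, g d.fst d.snd = ∑ x, ∑ y, if G.Adj x y then g x y else 0 := by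
  rw [← sum_product', ← sum_filter]
  exact sum_bij' (fun d _ ↦ d.toProd) (fun p h ↦ ⟨p, (mem_filter.1 h).2⟩) (by simp) (by simp)
    (by simp) (by simp) (by simp)

end SimpleGraph

section EdgeSum

variable {V : Type*} [Fintype V] (G : SimpleGraph V)

theorem edgeSum_mono {f g : V → ℝ} (hf : ∀ v, 0 ≤ f v) (hfg : ∀ v, f v ≤ g v) :
    edgeSum G f ≤ edgeSum G g := by
  refine sum_le_sum fun e _ => ?_
  induction e using Sym2.ind with
  | _ a b => exact mul_le_mul (hfg a) (hfg b) (hf b) ((hf a).trans (hfg a))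

theorem edgeSum_ite_mem_eq_edgesIn (X : Finset V) :
    edgeSum G (fun v => if v ∈ X then 1 else 0) = edgesIn G X := by
  rw [edgesIn, card_filter, Nat.cast_sum, edgeSum]
  refine sum_congr rfl fun e _ => ?_
  induction e using Sym2.ind with
  | _ a b => by_cases ha : a ∈ X <;> by_cases hb : b ∈ X <;> simp [ha, hb]

theorem edgesIn_le_edgesIn_add_sum_degree (X Y : Finset V) :
    edgesIn G Y ≤ edgesIn G X + ∑ v ∈ Y \ X, G.degree v := by
  have hsub : {e ∈ G.edgeFinset | ∀ v ∈ e, v ∈ Y} ⊆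
      {e ∈ G.edgeFinset | ∀ v ∈ e, v ∈ X} ∪ (Y \ X).biUnion fun v => G.incidenceFinset v := by
    intro e he
    rw [mem_filter] at he
    by_cases hX : ∀ v ∈ e, v ∈ X
    · exact mem_union_left _ (mem_filter.2 ⟨he.1, hX⟩)
    obtain ⟨v, hve, hvX⟩ := not_forall₂.1 hX
    refine mem_union_right _ (mem_biUnion.2 ⟨v, mem_sdiff.2 ⟨he.2 v hve, hvX⟩, ?_⟩)
    exact (G.mem_incidenceFinset v e).2 ⟨SimpleGraph.mem_edgeFinset.1 he.1, hve⟩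
  calc edgesIn G Y ≤ edgesIn G X + #((Y \ X).biUnion fun v => G.incidenceFinset v) :=
        (card_le_card hsub).trans (card_union_le _ _)
    _ ≤ edgesIn G X + ∑ v ∈ Y \ X, G.degree v := by
        gcongr
        exact card_biUnion_le.trans_eq (sum_congr rfl fun v _ => G.card_incidenceFinset_eq_degree v)

theorem two_mul_edgeSum_eq_dotProduct_mulVec (f : V → ℝ) :
    2 * edgeSum G f = f ⬝ᵥ G.adjMatrix ℝ *ᵥ f := by
  rw [SimpleGraph.dotProduct_mulVec_adjMatrix, ← SimpleGraph.sum_darts_eq_sum_sum_ite_adj,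
    two_mul, ← two_nsmul, edgeSum, ← SimpleGraph.sum_darts_edge_eq_two_nsmul]
  rfl

theorem two_mul_edgeSum_add_smul_single_sub_single (f : V → ℝ) (x y : V) (m : ℝ) :
    2 * edgeSum G (f + m • (Pi.single y 1 - Pi.single x 1)) =
      2 * edgeSum G f + 2 * m * ((G.adjMatrix ℝ *ᵥ f) y - (G.adjMatrix ℝ *ᵥ f) x)
        - 2 * m ^ 2 * G.adjMatrix ℝ x y := by
  have hcol (z : V) : f ⬝ᵥ (G.adjMatrix ℝ).col z = (G.adjMatrix ℝ *ᵥ f) z := by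
    rw [← mulVec_single_one, dotProduct_mulVec, ← mulVec_transpose, G.transpose_adjMatrix,
      dotProduct_single, mul_one]
  rw [two_mul_edgeSum_eq_dotProduct_mulVec, two_mul_edgeSum_eq_dotProduct_mulVec]
  simp only [mulVec_add, mulVec_smul, add_dotProduct, dotProduct_add, smul_dotProduct,
    dotProduct_smul, mulVec_sub, sub_dotProduct, dotProduct_sub, hcol, single_dotProduct,
    mulVec_single_one, one_mul, smul_eq_mul]
  simp only [col_apply, SimpleGraph.adjMatrix_apply, G.adj_comm y x, SimpleGraph.irrefl, if_false]
  ring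

theorem edgeSum_add_smul_single_sub_single_le (f : V → ℝ) {x y : V} {m : ℝ} (hm : 0 ≤ m)
    (hxy : (G.adjMatrix ℝ *ᵥ f) y ≤ (G.adjMatrix ℝ *ᵥ f) x) :
    edgeSum G (f + m • (Pi.single y 1 - Pi.single x 1)) ≤ edgeSum G f := by
  have hA : 0 ≤ G.adjMatrix ℝ x y := by
    rw [SimpleGraph.adjMatrix_apply]
    split_ifs <;> norm_num
  nlinarith [two_mul_edgeSum_add_smul_single_sub_single G f x y m,
    mul_nonneg hm (sub_nonneg.2 hxy), mul_nonneg (sq_nonneg m) hA]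

end EdgeSum

section Rounding

variable {V : Type*} [Fintype V] (G : SimpleGraph V)

noncomputable def fractionalVertices (f : V → ℝ) : Finset V := {v | f v ∈ Set.Ioo 0 1}

theorem exists_card_fractionalVertices_lt {f : V → ℝ} (hf : ∀ z, f z ∈ Set.Icc 0 1)
    (hfrac : 1 < #(fractionalVertices f)) :
    ∃ g : V → ℝ, (∀ z, g z ∈ Set.Icc 0 1) ∧ ∑ z, g z = ∑ z, f z ∧
      edgeSum G g ≤ edgeSum G f ∧ #(fractionalVertices g) < #(fractionalVertices f) := by
  obtain ⟨x, hx, y, hy, hxy⟩ := one_lt_card.1 hfrac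
  wlog hle : (G.adjMatrix ℝ *ᵥ f) y ≤ (G.adjMatrix ℝ *ᵥ f) x generalizing x y
  · exact this y hy x hx hxy.symm (le_of_not_ge hle)
  simp only [fractionalVertices, mem_filter_univ, Set.mem_Ioo] at hx hy
  -- the largest transfer from `x` to `y` keeping both values in `[0, 1]`
  set m := min (f x) (1 - f y)
  have hm : 0 ≤ m := le_min (hf x).1 (by linarith)
  have hmx : m ≤ f x := min_le_left _ _
  have hmy : m ≤ 1 - f y := min_le_right _ _
  set g := f + m • (Pi.single y 1 - Pi.single x 1)
  have hgx : g x = f x - m := by simp [g, hxy, sub_eq_add_neg]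
  have hgy : g y = f y + m := by simp [g, hxy.symm]
  have hg (z : V) (hzx : z ≠ x) (hzy : z ≠ y) : g z = f z := by simp [g, hzx, hzy]
  refine ⟨g, fun z => ?_, ?_, edgeSum_add_smul_single_sub_single_le G f hm hle, card_lt_card ?_⟩
  · by_cases hzx : z = x
    · subst hzx; rw [hgx]; constructor <;> linarith [hf z]
    by_cases hzy : z = y
    · subst hzy; rw [hgy]; constructor <;> linarith [hf z]
    rw [hg z hzx hzy]; exact hf z
  · simp [g, sum_add_distrib, ← mul_sum]
  · have hsub : fractionalVertices g ⊆ fractionalVertices f := by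
      intro z hz
      by_cases hzx : z = x
      · simpa [fractionalVertices, hzx] using hx
      by_cases hzy : z = y
      · simpa [fractionalVertices, hzy] using hy
      simpa [fractionalVertices, hg z hzx hzy] using hz
    refine (ssubset_iff_of_subset hsub).2 ?_
    rcases min_choice (f x) (1 - f y) with h | h
    · exact ⟨x, by simpa [fractionalVertices] using hx, by simp [fractionalVertices, hgx, m, h]⟩
    · exact ⟨y, by simpa [fractionalVertices] using hy, by simp [fractionalVertices, hgy, m, h]⟩

theorem exists_card_fractionalVertices_le_one {f : V → ℝ} (hf : ∀ z, f z ∈ Set.Icc 0 1) :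
    ∃ g : V → ℝ, (∀ z, g z ∈ Set.Icc 0 1) ∧ ∑ z, g z = ∑ z, f z ∧
      edgeSum G g ≤ edgeSum G f ∧ #(fractionalVertices g) ≤ 1 := by
  induction hk : #(fractionalVertices f) using Nat.strong_induction_on generalizing f with
  | _ k ih =>
    by_cases hk1 : k ≤ 1
    · exact ⟨f, hf, rfl, le_rfl, hk ▸ hk1⟩
    obtain ⟨g, hg, hsum, hle, hlt⟩ := exists_card_fractionalVertices_lt G hf (hk ▸ not_le.1 hk1)
    obtain ⟨h, hh, hsum', hle', hcard⟩ := ih _ (hk ▸ hlt) hg rfl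
    exact ⟨h, hh, hsum'.trans hsum, hle'.trans hle, hcard⟩

theorem exists_sum_le_card_and_edgesIn_le_edgeSum_add {f : V → ℝ}
    (hf : ∀ z, f z ∈ Set.Icc 0 1) :
    ∃ Y : Finset V, ∑ z, f z ≤ #Y ∧
      (edgesIn G Y : ℝ) ≤ edgeSum G f + #(fractionalVertices f) * Fintype.card V := by
  set X : Finset V := {v | f v = 1}
  set Y : Finset V := {v | 0 < f v}
  have hYX : Y \ X = fractionalVertices f := by
    ext v
    simp only [X, Y, fractionalVertices, mem_sdiff, mem_filter_univ, Set.mem_Ioo]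
    exact and_congr_right fun _ => (hf v).2.lt_iff_ne.symm
  have hdeg : ∑ v ∈ Y \ X, G.degree v ≤ #(Y \ X) * Fintype.card V := by
    simpa using sum_le_card_nsmul _ _ _ fun v _ => (G.degree_lt_card_verts v).le
  have hX : (edgesIn G X : ℝ) ≤ edgeSum G f := by
    rw [← edgeSum_ite_mem_eq_edgesIn]
    refine edgeSum_mono G (fun v => by split_ifs <;> norm_num) fun v => ?_
    split_ifs with h
    · exact ((mem_filter_univ v).1 h).ge
    · exact (hf v).1
  refine ⟨Y, ?_, ?_⟩
  · calc ∑ z, f z ≤ ∑ z, if 0 < f z then (1 : ℝ) else 0 :=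
          sum_le_sum fun z _ => by split_ifs with h; exacts [(hf z).2, not_lt.1 h]
      _ = #Y := by rw [sum_boole]
  · rw [← hYX]
    calc (edgesIn G Y : ℝ) ≤ edgesIn G X + (#(Y \ X) * Fintype.card V : ℕ) := by
          exact_mod_cast (edgesIn_le_edgesIn_add_sum_degree G X Y).trans (by gcongr)
      _ ≤ edgeSum G f + #(Y \ X) * Fintype.card V := by push_cast; linarith

end Rounding

theorem weighted_denseness_general {V : Type*} [Fintype V] (G : SimpleGraph V) (ε d : ℝ)
    (hd0 : 0 ≤ d)
    (hG : IsEpsDense G ε d) (f : V → ℝ) (hf : ∀ x, 0 ≤ f x ∧ f x ≤ 1)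
    (hsum : ε * (Fintype.card V : ℝ) ≤ ∑ x, f x) :
    d / 2 * (∑ x, f x) ^ 2 - (Fintype.card V : ℝ) ≤ edgeSum G f := by
  obtain ⟨g, hg, hsum_g, hle, hfrac⟩ := exists_card_fractionalVertices_le_one G hf
  obtain ⟨Y, hY, hedges⟩ := exists_sum_le_card_and_edgesIn_le_edgeSum_add G hg
  have hfY : ∑ x, f x ≤ #Y := hsum_g ▸ hY
  have hround : (#(fractionalVertices g) : ℝ) * Fintype.card V ≤ Fintype.card V :=
    mul_le_of_le_one_left (Nat.cast_nonneg _) (by exact_mod_cast hfrac)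
  have hS : 0 ≤ ∑ x, f x := sum_nonneg fun x _ => (hf x).1
  calc d / 2 * (∑ x, f x) ^ 2 - Fintype.card V ≤ d / 2 * (#Y : ℝ) ^ 2 - Fintype.card V := by
        gcongr
    _ ≤ edgeSum G f := by linarith [hG Y (hsum.trans hfY)]

theorem weighted_denseness {V : Type*} [Fintype V] (G : SimpleGraph V) (ε d : ℝ)
    (hε : 0 < ε) (hε1 : ε < 1) (hd0 : 0 ≤ d) (hd1 : d ≤ 1)
    (hG : IsEpsDense G ε d) (f : V → ℝ) (hf : ∀ x, 0 ≤ f x ∧ f x ≤ 1)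
    (hsum : ε * (Fintype.card V : ℝ) ≤ ∑ x, f x) :
    d / 2 * (∑ x, f x) ^ 2 - (Fintype.card V : ℝ) ≤ edgeSum G f :=
  weighted_denseness_general G ε d hd0 hG f hf hsum
end

section
/- For any positive integer k and any graph G with |E(G)| ≥ (d/2)|V(G)|², the number of homomorphisms from the path P_k with k edges into G is at least d^k · |V(G)|^{k+1}. -/
open Finset
open scoped Classical

/-! Write `f_m(x)` for the number of walks of length `m` starting at `x` and `W_m = ∑ₓ f_m(x)`,
so that `W_k` counts homomorphisms of the path with `k` edges and `W_1 = 2|E|`; it suffices to show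
`W_1^k ≤ n^(k-1) W_k`. For even `k = 2m`, `W_{2m} = ∑ₓ f_m(x)²` and Cauchy–Schwarz reduces to `m`.
For odd `k = 2m+1` we follow Sidorenko: `W_{2m+1} = ∑_{x∼y} f_m(x) f_m(y)`, so the power-mean
inequality `M₁ ≥ M_{-1/(2m)}` over ordered edges gives
`W_1^{2m+1} ≤ W_{2m+1} (∑_{x∼y} (f_m(x) f_m(y))^{-1/(2m)})^{2m}`. By AM–GM that last sum is at most
`T_m = ∑_{x∼y} f_m(y)^{-1/m}`, and `T_m ≤ n` by induction: since `f_{m+1}(x) = ∑_{y∼x} f_m(y)`,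
the same power-mean inequality at each vertex, followed by Young's inequality, bounds `T_{m+1}` by
the convex combination `(m T_m + n) / (m + 1)`. -/

namespace Matrix

theorem dotProduct_pow_mulVec_eq_sum_prod {n R : Type*} [Fintype n] [DecidableEq n]
    [CommSemiring R] (M : Matrix n n R) (c e : n → R) (k : ℕ) :
    c ⬝ᵥ (M ^ k *ᵥ e) = ∑ a : Fin (k + 1) → n,
      c (a 0) * (∏ i : Fin k, M (a i.castSucc) (a i.succ)) * e (a (Fin.last k)) := by
  induction k generalizing c with
  | zero =>
    rw [pow_zero, one_mulVec, ← (Equiv.funUnique (Fin 1) n).symm.sum_comp]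
    simp [dotProduct]
  | succ k ih =>
    rw [pow_succ', ← mulVec_mulVec, dotProduct_mulVec, ih,
      ← (Fin.consEquiv fun _ : Fin (k + 2) => n).sum_comp, Fintype.sum_prod_type, sum_comm]
    refine sum_congr rfl fun b _ => ?_
    simp [Fin.prod_univ_succ, vecMul, dotProduct, sum_mul, mul_assoc]

end Matrix

theorem Real.mul_rpow_div_two_le {x y : ℝ} (hx : 0 ≤ x) (hy : 0 ≤ y) (p : ℝ) :
    (x * y) ^ (p / 2) ≤ (x ^ p + y ^ p) / 2 := by
  have h := Real.geom_mean_le_arith_mean2_weighted (w₁ := 1 / 2) (w₂ := 1 / 2)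
    (by norm_num) (by norm_num) (Real.rpow_nonneg hx p) (Real.rpow_nonneg hy p) (by norm_num)
  rw [← Real.rpow_mul hx, ← Real.rpow_mul hy, ← Real.mul_rpow hx hy] at h
  rw [div_eq_mul_one_div p]
  linarith

theorem Finset.card_pow_succ_le_sum_mul_pow_sum_rpow {ι : Type*} (s : Finset ι) {a : ι → ℝ}
    (ha : ∀ i ∈ s, 0 < a i) {r : ℕ} (hr : r ≠ 0) :
    (#s : ℝ) ^ (r + 1) ≤ (∑ i ∈ s, a i) * (∑ i ∈ s, a i ^ (-(r : ℝ)⁻¹)) ^ r := by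
  rcases s.eq_empty_or_nonempty with rfl | hs
  · simp
  set b : ι → ℝ := fun i => a i ^ (-(r : ℝ)⁻¹)
  have hb : ∀ i ∈ s, 0 < b i := fun i hi => Real.rpow_pos_of_pos (ha i hi) _
  have hba : ∀ i ∈ s, (#s : ℝ)⁻¹ * b i ^ (-(r : ℤ)) = (#s : ℝ)⁻¹ * a i := fun i hi => by
    simp [b, Real.rpow_neg (ha i hi).le, inv_pow, Real.rpow_inv_natCast_pow (ha i hi).le hr]
  have hn : (0 : ℝ) < #s := by exact_mod_cast hs.card_pos
  have jensen := Real.zpow_arith_mean_le_arith_mean_zpow s (fun _ => (#s : ℝ)⁻¹) b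
    (fun _ _ => by positivity) (by simp [hn.ne']) hb (-(r : ℤ))
  rw [sum_congr rfl hba, ← mul_sum, ← mul_sum, zpow_neg, zpow_natCast, mul_pow, mul_inv,
    inv_pow, inv_inv, ← div_eq_mul_inv, inv_mul_eq_div,
    div_le_div_iff₀ (pow_pos (sum_pos hb hs) r) hn] at jensen
  simpa [pow_succ] using jensen

namespace SimpleGraph

open Matrix

variable {V : Type*} [Fintype V] (G : SimpleGraph V)

noncomputable def walksFrom (m : ℕ) : V → ℝ := G.adjMatrix ℝ ^ m *ᵥ 1

@[simp] lemma walksFrom_zero : G.walksFrom 0 = 1 := by simp [walksFrom]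

lemma walksFrom_succ (m : ℕ) (x : V) :
    G.walksFrom (m + 1) x = ∑ y ∈ G.neighborFinset x, G.walksFrom m y := by
  rw [walksFrom, pow_succ', ← mulVec_mulVec, adjMatrix_mulVec_apply, walksFrom]

lemma walksFrom_one (x : V) : G.walksFrom 1 x = G.degree x := by
  simp [walksFrom_succ, card_neighborFinset_eq_degree]

lemma walksFrom_nonneg (m : ℕ) (x : V) : 0 ≤ G.walksFrom m x := by
  induction m generalizing x with
  | zero => simp
  | succ m ih => rw [walksFrom_succ]; exact sum_nonneg fun y _ => ih y

lemma one_le_walksFrom_of_adj {x y : V} (h : G.Adj x y) (m : ℕ) : 1 ≤ G.walksFrom m x := by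
  induction m generalizing x y with
  | zero => simp
  | succ m ih =>
    rw [walksFrom_succ]
    exact (ih h.symm).trans <| single_le_sum (fun z _ => G.walksFrom_nonneg m z)
      ((G.mem_neighborFinset x y).2 h)

lemma sum_walksFrom_add (a b : ℕ) :
    ∑ x, G.walksFrom (a + b) x = ∑ x, G.walksFrom a x * G.walksFrom b x := by
  have hsymm : (G.adjMatrix ℝ ^ a)ᵀ = G.adjMatrix ℝ ^ a := (G.isSymm_adjMatrix.pow a).eq
  calc ∑ x, G.walksFrom (a + b) x = 1 ᵥ* (G.adjMatrix ℝ ^ a) ⬝ᵥ G.walksFrom b := by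
        rw [← dotProduct_mulVec, walksFrom, walksFrom, pow_add, ← mulVec_mulVec, one_dotProduct]
    _ = ∑ x, G.walksFrom a x * G.walksFrom b x := by
        rw [← hsymm, vecMul_transpose]; rfl

lemma sum_walksFrom_one : ∑ x, G.walksFrom 1 x = 2 * #G.edgeFinset := by
  simp only [walksFrom_one]
  exact_mod_cast G.sum_degrees_eq_twice_card_edges

lemma pathHomCount_eq_sum_walksFrom (k : ℕ) : (pathHomCount G k : ℝ) = ∑ x, G.walksFrom k x := by
  rw [← one_dotProduct, walksFrom, dotProduct_pow_mulVec_eq_sum_prod, pathHomCount,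
    card_filter, Nat.cast_sum]
  refine sum_congr rfl fun a _ => ?_
  simp [adjMatrix_apply, prod_boole]

lemma sum_sum_neighborFinset_comm {M : Type*} [AddCommMonoid M] (F : V → V → M) :
    ∑ x, ∑ y ∈ G.neighborFinset x, F x y = ∑ x, ∑ y ∈ G.neighborFinset x, F y x := by
  simp only [neighborFinset_eq_filter, sum_filter]
  rw [sum_comm]
  simp [G.adj_comm]

lemma sum_sum_neighborFinset_eq_sum_degree_mul (f : V → ℝ) :
    ∑ x, ∑ y ∈ G.neighborFinset x, f y = ∑ x, G.degree x * f x := by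
  simp [G.sum_sum_neighborFinset_comm (fun _ y => f y), card_neighborFinset_eq_degree]

lemma sq_sum_walksFrom_le (m : ℕ) :
    (∑ x, G.walksFrom m x) ^ 2 ≤ Fintype.card V * ∑ x, G.walksFrom (2 * m) x := by
  rw [two_mul, sum_walksFrom_add]
  simpa [sq] using sq_sum_le_card_mul_sum_sq (s := univ) (f := G.walksFrom m)

lemma degree_mul_walksFrom_succ_rpow_le {m : ℕ} (hm : m ≠ 0) (x : V) :
    G.degree x * G.walksFrom (m + 1) x ^ (-((m + 1 : ℕ) : ℝ)⁻¹) ≤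
      (m * ∑ y ∈ G.neighborFinset x, G.walksFrom m y ^ (-(m : ℝ)⁻¹) + 1) / (m + 1) := by
  set Z := ∑ y ∈ G.neighborFinset x, G.walksFrom m y ^ (-(m : ℝ)⁻¹)
  have hZ : 0 ≤ Z := sum_nonneg fun y _ => Real.rpow_nonneg (G.walksFrom_nonneg m y) _
  have power_mean : (G.degree x : ℝ) ^ (m + 1) ≤ G.walksFrom (m + 1) x * Z ^ m := by
    rw [walksFrom_succ, ← card_neighborFinset_eq_degree]
    refine (G.neighborFinset x).card_pow_succ_le_sum_mul_pow_sum_rpow (fun y hy => ?_) hm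
    exact one_pos.trans_le (G.one_le_walksFrom_of_adj ((G.mem_neighborFinset x y).1 hy).symm m)
  rcases (G.degree x).eq_zero_or_pos with h0 | hpos
  · rw [h0, Nat.cast_zero, zero_mul]
    positivity
  obtain ⟨y, hxy⟩ := (G.degree_pos_iff_exists_adj x).1 hpos
  have hF : 0 < G.walksFrom (m + 1) x := one_pos.trans_le (G.one_le_walksFrom_of_adj hxy _)
  set u := (G.degree x : ℝ) * G.walksFrom (m + 1) x ^ (-((m + 1 : ℕ) : ℝ)⁻¹)
  have hu : 0 ≤ u := by positivity
  have hu_pow : u ^ (m + 1) ≤ Z ^ m := by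
    rw [mul_pow, Real.rpow_neg hF.le, inv_pow, Real.rpow_inv_natCast_pow hF.le (by omega),
      ← div_eq_mul_inv, div_le_iff₀ hF, mul_comm]
    exact power_mean
  have hθ : (m : ℝ) / (m + 1) + 1 / (m + 1) = 1 := by field_simp
  calc u = (u ^ (m + 1)) ^ ((m + 1 : ℕ) : ℝ)⁻¹ := (Real.pow_rpow_inv_natCast hu (by omega)).symm
    _ ≤ (Z ^ m) ^ ((m + 1 : ℕ) : ℝ)⁻¹ := by gcongr
    _ = Z ^ ((m : ℝ) / (m + 1)) * 1 ^ (1 / ((m : ℝ) + 1)) := by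
      rw [← Real.rpow_natCast, ← Real.rpow_mul hZ, Real.one_rpow, mul_one]
      push_cast
      ring_nf
    _ ≤ (m / (m + 1)) * Z + 1 / (m + 1) * 1 :=
      Real.geom_mean_le_arith_mean2_weighted (by positivity) (by positivity) hZ zero_le_one hθ
    _ = _ := by field_simp

lemma sum_sum_walksFrom_rpow_le_card {m : ℕ} (hm : m ≠ 0) :
    ∑ x, ∑ y ∈ G.neighborFinset x, G.walksFrom m y ^ (-(m : ℝ)⁻¹) ≤ Fintype.card V := by
  induction m with
  | zero => contradiction
  | succ m ih =>
    rw [sum_sum_neighborFinset_eq_sum_degree_mul]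
    rcases eq_or_ne m 0 with rfl | hm
    · calc ∑ x, (G.degree x : ℝ) * G.walksFrom (0 + 1) x ^ (-((0 + 1 : ℕ) : ℝ)⁻¹)
          ≤ ∑ _ : V, (1 : ℝ) := by
            gcongr with x
            simpa [walksFrom_one, Real.rpow_neg_one] using mul_inv_le_one
        _ = Fintype.card V := by simp
    · calc _ ≤ ∑ x, (m * ∑ y ∈ G.neighborFinset x, G.walksFrom m y ^ (-(m : ℝ)⁻¹) + 1) / (m + 1) :=
            sum_le_sum fun x _ => G.degree_mul_walksFrom_succ_rpow_le hm x
        _ = (m * ∑ x, ∑ y ∈ G.neighborFinset x, G.walksFrom m y ^ (-(m : ℝ)⁻¹)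
              + Fintype.card V) / (m + 1) := by
            rw [← sum_div, sum_add_distrib, ← mul_sum]
            simp
        _ ≤ Fintype.card V := by
            rw [div_le_iff₀ (by positivity)]
            nlinarith [ih hm]

lemma sum_walksFrom_one_pow_le_of_odd {m : ℕ} (hm : m ≠ 0) :
    (∑ x, G.walksFrom 1 x) ^ (2 * m + 1) ≤
      (Fintype.card V : ℝ) ^ (2 * m) * ∑ x, G.walksFrom (2 * m + 1) x := by
  set s := univ.sigma fun x => G.neighborFinset x
  set a : (Σ _ : V, V) → ℝ := fun p => G.walksFrom m p.1 * G.walksFrom m p.2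
  have ha : ∀ p ∈ s, 0 < a p := by
    rintro ⟨x, y⟩ hp
    have hxy : G.Adj x y := by simpa [s] using hp
    exact mul_pos (one_pos.trans_le (G.one_le_walksFrom_of_adj hxy m))
      (one_pos.trans_le (G.one_le_walksFrom_of_adj hxy.symm m))
  have hcard : (#s : ℝ) = ∑ x, G.walksFrom 1 x := by
    simp [s, card_sigma, walksFrom_one, card_neighborFinset_eq_degree]
  have hsum : ∑ p ∈ s, a p = ∑ x, G.walksFrom (2 * m + 1) x := by
    rw [show 2 * m + 1 = m + (m + 1) by ring, sum_walksFrom_add, sum_sigma]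
    simp [a, walksFrom_succ, mul_sum]
  have hroot : ∑ p ∈ s, a p ^ (-((2 * m : ℕ) : ℝ)⁻¹) ≤ Fintype.card V := by
    set F : V → ℝ := fun x => G.walksFrom m x ^ (-(m : ℝ)⁻¹)
    have hswap := G.sum_sum_neighborFinset_comm fun x _ => F x
    calc ∑ p ∈ s, a p ^ (-((2 * m : ℕ) : ℝ)⁻¹)
        ≤ ∑ x, ∑ y ∈ G.neighborFinset x, (F x + F y) / 2 := by
          rw [sum_sigma]
          gcongr with x _ y _
          rw [show -((2 * m : ℕ) : ℝ)⁻¹ = -(m : ℝ)⁻¹ / 2 by push_cast; ring]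
          exact Real.mul_rpow_div_two_le (G.walksFrom_nonneg m x) (G.walksFrom_nonneg m y) _
      _ = ∑ x, ∑ y ∈ G.neighborFinset x, F y := by
          simp only [add_div, sum_add_distrib, ← sum_div, hswap]
          ring
      _ ≤ Fintype.card V := G.sum_sum_walksFrom_rpow_le_card hm
  calc (∑ x, G.walksFrom 1 x) ^ (2 * m + 1) = (#s : ℝ) ^ (2 * m + 1) := by rw [hcard]
    _ ≤ (∑ p ∈ s, a p) * (∑ p ∈ s, a p ^ (-((2 * m : ℕ) : ℝ)⁻¹)) ^ (2 * m) :=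
      s.card_pow_succ_le_sum_mul_pow_sum_rpow ha (by omega)
    _ ≤ (∑ p ∈ s, a p) * (Fintype.card V : ℝ) ^ (2 * m) := by
      gcongr
      · exact sum_nonneg fun p hp => (ha p hp).le
      · exact sum_nonneg fun p hp => Real.rpow_nonneg (ha p hp).le _
    _ = _ := by rw [hsum, mul_comm]

lemma sum_walksFrom_one_pow_le {k : ℕ} (hk : k ≠ 0) :
    (∑ x, G.walksFrom 1 x) ^ k ≤ (Fintype.card V : ℝ) ^ (k - 1) * ∑ x, G.walksFrom k x := by
  induction k using Nat.strong_induction_on with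
  | _ k ih =>
    have hW₁ : 0 ≤ ∑ x, G.walksFrom 1 x := sum_nonneg fun x _ => G.walksFrom_nonneg 1 x
    obtain ⟨m, rfl | rfl⟩ := k.even_or_odd'
    · have hm : m ≠ 0 := by omega
      calc (∑ x, G.walksFrom 1 x) ^ (2 * m) = ((∑ x, G.walksFrom 1 x) ^ m) ^ 2 := by
            rw [← pow_mul, mul_comm]
        _ ≤ ((Fintype.card V : ℝ) ^ (m - 1) * ∑ x, G.walksFrom m x) ^ 2 := by
            gcongr
            exact ih m (by omega) hm
        _ = (Fintype.card V : ℝ) ^ (2 * (m - 1)) * (∑ x, G.walksFrom m x) ^ 2 := by ring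
        _ ≤ (Fintype.card V : ℝ) ^ (2 * (m - 1)) * (Fintype.card V * ∑ x, G.walksFrom (2 * m) x) := by
            gcongr
            exact G.sq_sum_walksFrom_le m
        _ = (Fintype.card V : ℝ) ^ (2 * m - 1) * ∑ x, G.walksFrom (2 * m) x := by
            rw [← mul_assoc, ← pow_succ, show 2 * (m - 1) + 1 = 2 * m - 1 by omega]
    · rcases eq_or_ne m 0 with rfl | hm
      · simp
      · simpa using G.sum_walksFrom_one_pow_le_of_odd hm

end SimpleGraph

theorem blakley_roy_paths_general {V : Type*} [Fintype V] (G : SimpleGraph V) (k : ℕ)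
    (d : ℝ) (hd : 0 ≤ d)
    (hE : d / 2 * (Fintype.card V : ℝ) ^ 2 ≤ (G.edgeFinset.card : ℝ)) :
    d ^ k * (Fintype.card V : ℝ) ^ (k + 1) ≤ (pathHomCount G k : ℝ) := by
  rw [G.pathHomCount_eq_sum_walksFrom]
  have hW : 0 ≤ ∑ x, G.walksFrom k x := sum_nonneg fun x _ => G.walksFrom_nonneg k x
  rcases eq_or_ne k 0 with rfl | hk
  · simp
  rcases (Fintype.card V).eq_zero_or_pos with hn | hn
  · simp [hn, hW]
  have hdense : d * (Fintype.card V : ℝ) ^ 2 ≤ ∑ x, G.walksFrom 1 x := by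
    rw [G.sum_walksFrom_one]
    linarith
  obtain ⟨j, rfl⟩ := Nat.exists_eq_succ_of_ne_zero hk
  rw [← mul_le_mul_iff_of_pos_left (pow_pos (Nat.cast_pos.2 hn : (0 : ℝ) < _) j)]
  calc (Fintype.card V : ℝ) ^ j * (d ^ (j + 1) * (Fintype.card V : ℝ) ^ (j + 1 + 1))
      = (d * (Fintype.card V : ℝ) ^ 2) ^ (j + 1) := by ring
    _ ≤ (∑ x, G.walksFrom 1 x) ^ (j + 1) := by gcongr
    _ ≤ (Fintype.card V : ℝ) ^ j * ∑ x, G.walksFrom (j + 1) x := by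
      simpa using G.sum_walksFrom_one_pow_le hk

theorem blakley_roy_paths {V : Type*} [Fintype V] (G : SimpleGraph V) (k : ℕ) (hk : 1 ≤ k)
    (d : ℝ) (hd : 0 ≤ d)
    (hE : d / 2 * (Fintype.card V : ℝ) ^ 2 ≤ (G.edgeFinset.card : ℝ)) :
    d ^ k * (Fintype.card V : ℝ) ^ (k + 1) ≤ (pathHomCount G k : ℝ) :=
  blakley_roy_paths_general G k d hd hE
end

section
/- Let G be a graph on n vertices with m ≥ 1, and let q(x,y) be the number of walks of length m from x to y. Then ∑_{x,y ∈ V(G)} q(x,y) equals the number of walks of length m in G, which is at least (2|E(G)|/n²)^m · n^{m+1}. -/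
open Finset
open scoped Classical

/-!
Weight each walk `a = (a₀, …, a_k)` by the probability `q(a)` that the stationary random walk
(start from the degree distribution `π = deg / 2|E|`, then move to a uniform neighbour) traverses
it. Stationarity makes every vertex of the walk `π`-distributed, so the entropy of `q` is
`log 2|E| + (k - 1) 𝔼_π log deg`. Entropy is at most the logarithm of the support size: for `q`
this bounds it by `log (number of walks)`, and for `π` it gives `log 2|E| - 𝔼_π log deg ≤ log n`.
Together, `log (number of walks) ≥ k log 2|E| - (k - 1) log n`.
-/

open Real

theorem Real.sum_negMulLog_le_log_card {ι : Type*} {s : Finset ι} {w : ι → ℝ}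
    (hw : ∀ i ∈ s, 0 ≤ w i) (hw₁ : ∑ i ∈ s, w i = 1) :
    ∑ i ∈ s, negMulLog (w i) ≤ log #s := by
  set t := s.filter (fun i => w i ≠ 0)
  have hwt : ∑ i ∈ t, w i = 1 := by rw [sum_filter_ne_zero, hw₁]
  have hpos : ∀ i ∈ t, 0 < w i := fun i hi =>
    (hw i (mem_filter.1 hi).1).lt_of_ne' (mem_filter.1 hi).2
  have hjensen := strictConcaveOn_log_Ioi.concaveOn.le_map_sum (p := fun i => (w i)⁻¹)
    (fun i hi => (hpos i hi).le) hwt fun i hi => inv_pos.2 (hpos i hi)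
  have hcard : ∑ i ∈ t, w i • (w i)⁻¹ = #t := by
    rw [card_eq_sum_ones, Nat.cast_sum, Nat.cast_one]
    exact sum_congr rfl fun i hi => mul_inv_cancel₀ (hpos i hi).ne'
  have ht : t.Nonempty := nonempty_of_sum_ne_zero (hwt ▸ one_ne_zero)
  calc ∑ i ∈ s, negMulLog (w i) = ∑ i ∈ t, w i • log (w i)⁻¹ := by
        rw [sum_filter_of_ne fun i _ hi => by intro h0; simp [h0] at hi]
        exact sum_congr rfl fun i _ => by simp [negMulLog, log_inv]
    _ ≤ log #t := hcard ▸ hjensen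
    _ ≤ log #s := log_le_log (by exact_mod_cast ht.card_pos) (by exact_mod_cast card_filter_le _ _)

theorem Real.mul_negMulLog_inv_mul {d : ℝ} (hd : d ≠ 0) (w : ℝ) :
    d * negMulLog (d⁻¹ * w) = negMulLog w + w * log d := by
  rw [negMulLog_mul]
  simp only [negMulLog, log_inv]
  field_simp
  ring

namespace SimpleGraph

variable {V : Type*} [Fintype V] (G : SimpleGraph V)

noncomputable def walkTuples (k : ℕ) : Finset (Fin (k + 1) → V) :=
  univ.filter fun a => ∀ i : Fin k, G.Adj (a i.castSucc) (a i.succ)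

/-- The probability that the stationary random walk on `G` traverses `a` from its last vertex to
its first. -/
noncomputable def stationaryWalkWeight : (k : ℕ) → (Fin (k + 1) → V) → ℝ
  | 0, a => G.degree (a 0) / (2 * #G.edgeFinset)
  | k + 1, a => (G.degree (a 1) : ℝ)⁻¹ * stationaryWalkWeight k (Fin.tail a)

theorem sum_sum_walkCount (m : ℕ) : ∑ x, ∑ y, walkCount G m x y = pathHomCount G m := by
  rw [pathHomCount, card_eq_sum_card_fiberwise (f := fun a => (a 0, a (Fin.last m))) (t := univ)
    fun _ _ => mem_univ _, ← univ_product_univ, sum_product]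
  refine sum_congr rfl fun x _ => sum_congr rfl fun y _ => ?_
  rw [walkCount, filter_filter]
  simp only [Prod.ext_iff, and_comm, and_left_comm, and_assoc]

theorem sum_sum_neighborFinset {M : Type*} [AddCommMonoid M] (f : V → M) :
    ∑ y, ∑ x ∈ G.neighborFinset y, f x = ∑ x, G.degree x • f x := by
  simp_rw [neighborFinset_eq_filter, sum_filter]
  rw [sum_comm]
  simp_rw [← sum_filter, sum_const, ← card_neighborFinset_eq_degree, neighborFinset_eq_filter,
    adj_comm]

theorem sum_degree_div_two_mul_card_edgeFinset (he : #G.edgeFinset ≠ 0) :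
    ∑ x, (G.degree x : ℝ) / (2 * #G.edgeFinset) = 1 := by
  rw [← sum_div, ← Nat.cast_sum, sum_degrees_eq_twice_card_edges, Nat.cast_mul, Nat.cast_two,
    div_self (by positivity)]

theorem card_pos_of_card_edgeFinset_ne_zero (he : #G.edgeFinset ≠ 0) : 0 < Fintype.card V := by
  obtain ⟨e, -⟩ := card_ne_zero.1 he
  induction e using Sym2.ind with
  | h x _ => exact Fintype.card_pos_iff.2 ⟨x⟩

theorem log_sub_log_card_le_sum_mul_log_degree (he : #G.edgeFinset ≠ 0) :
    log (2 * #G.edgeFinset) - log (Fintype.card V) ≤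
      ∑ x, G.degree x / (2 * #G.edgeFinset) * log (G.degree x) := by
  have hπ : ∀ x, negMulLog (G.degree x / (2 * #G.edgeFinset)) =
      G.degree x / (2 * #G.edgeFinset) * log (2 * #G.edgeFinset) -
        G.degree x / (2 * #G.edgeFinset) * log (G.degree x) := fun x => by
    rw [div_eq_mul_inv, negMulLog_mul]
    simp only [negMulLog, log_inv]
    ring
  have hentropy := sum_negMulLog_le_log_card (s := univ) (fun x _ => by positivity)
    (G.sum_degree_div_two_mul_card_edgeFinset he)
  rw [sum_congr rfl fun x _ => hπ x, sum_sub_distrib, ← sum_mul,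
    G.sum_degree_div_two_mul_card_edgeFinset he, card_univ] at hentropy
  linarith

variable {G}

theorem cons_mem_walkTuples_iff {k : ℕ} {x : V} {b : Fin (k + 1) → V} :
    Fin.cons x b ∈ G.walkTuples (k + 1) ↔ G.Adj x (b 0) ∧ b ∈ G.walkTuples k := by
  simp only [walkTuples, mem_filter, mem_univ, true_and, Fin.forall_fin_succ,
    Fin.castSucc_zero, Fin.cons_zero, Fin.succ_zero_eq_one, Fin.cons_one, ← Fin.succ_castSucc,
    Fin.cons_succ]

theorem degree_pos_of_mem_walkTuples {k : ℕ} {a : Fin (k + 2) → V}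
    (ha : a ∈ G.walkTuples (k + 1)) : 0 < G.degree (a 0) ∧ 0 < G.degree (a 1) := by
  have hadj : G.Adj (a 0) (a 1) := (mem_filter.1 ha).2 0
  exact ⟨(degree_pos_iff_exists_adj G _).2 ⟨_, hadj⟩,
    (degree_pos_iff_exists_adj G _).2 ⟨_, hadj.symm⟩⟩

theorem sum_walkTuples_succ {M : Type*} [AddCommMonoid M] {k : ℕ} (g : (Fin (k + 2) → V) → M) :
    ∑ a ∈ G.walkTuples (k + 1), g a =
      ∑ b ∈ G.walkTuples k, ∑ x ∈ G.neighborFinset (b 0), g (Fin.cons x b) := by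
  rw [← univ_inter (G.walkTuples (k + 1)), ← sum_ite_mem, ← (Fin.consEquiv fun _ => V).sum_comp,
    Fintype.sum_prod_type, sum_comm, ← univ_inter (G.walkTuples k), ← sum_ite_mem]
  refine sum_congr rfl fun b _ => ?_
  simp only [Fin.consEquiv, Equiv.coe_fn_mk, cons_mem_walkTuples_iff, and_comm (a := G.Adj _ _),
    ite_and]
  split_ifs
  · rw [← sum_filter]
    congr 1
    ext x
    simp [adj_comm]
  · simp

theorem stationaryWalkWeight_cons {k : ℕ} (x : V) (b : Fin (k + 1) → V) :
    G.stationaryWalkWeight (k + 1) (Fin.cons x b) =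
      (G.degree (b 0) : ℝ)⁻¹ * G.stationaryWalkWeight k b := by
  rw [stationaryWalkWeight, Fin.cons_one, Fin.tail_cons]

theorem stationaryWalkWeight_nonneg :
    ∀ (k : ℕ) (a : Fin (k + 1) → V), 0 ≤ G.stationaryWalkWeight k a
  | 0, _ => by rw [stationaryWalkWeight]; positivity
  | k + 1, a => by
    rw [stationaryWalkWeight]
    exact mul_nonneg (by positivity) (stationaryWalkWeight_nonneg k _)

theorem sum_stationaryWalkWeight_mul (f : V → ℝ) (k : ℕ) :
    ∑ a ∈ G.walkTuples k, G.stationaryWalkWeight k a * f (a 0) =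
      ∑ x, G.degree x / (2 * #G.edgeFinset) * f x := by
  induction k generalizing f with
  | zero =>
    have hW : G.walkTuples 0 = univ := by ext a; simp [walkTuples]
    rw [hW]
    exact Fintype.sum_equiv (Equiv.funUnique (Fin 1) V) _ _ fun a => by
      rw [stationaryWalkWeight]; rfl
  | succ k ih =>
    have hstep : ∀ y : V, G.degree y / (2 * #G.edgeFinset) * ((G.degree y : ℝ)⁻¹ *
        ∑ x ∈ G.neighborFinset y, f x) =
          (2 * #G.edgeFinset : ℝ)⁻¹ * ∑ x ∈ G.neighborFinset y, f x := by
      intro y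
      rcases eq_or_ne (G.degree y) 0 with hy | hy
      · simp [card_eq_zero.1 (card_neighborFinset_eq_degree G y ▸ hy)]
      · field_simp
    simp_rw [sum_walkTuples_succ, stationaryWalkWeight_cons, Fin.cons_zero, mul_assoc, ← mul_sum,
      mul_left_comm _ (G.stationaryWalkWeight k _)]
    rw [ih fun y => (G.degree y : ℝ)⁻¹ * ∑ x ∈ G.neighborFinset y, f x]
    simp_rw [hstep, ← mul_sum, sum_sum_neighborFinset, mul_sum, nsmul_eq_mul]
    exact sum_congr rfl fun x _ => by ring

theorem sum_stationaryWalkWeight (he : #G.edgeFinset ≠ 0) (k : ℕ) :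
    ∑ a ∈ G.walkTuples k, G.stationaryWalkWeight k a = 1 := by
  have h := sum_stationaryWalkWeight_mul (G := G) (fun _ => 1) k
  simp only [mul_one] at h
  rw [h, G.sum_degree_div_two_mul_card_edgeFinset he]

theorem sum_negMulLog_stationaryWalkWeight (he : #G.edgeFinset ≠ 0) (k : ℕ) :
    ∑ a ∈ G.walkTuples (k + 1), negMulLog (G.stationaryWalkWeight (k + 1) a) =
      log (2 * #G.edgeFinset) + k * ∑ x, G.degree x / (2 * #G.edgeFinset) * log (G.degree x) := by
  induction k with
  | zero =>
    have hq : ∀ a ∈ G.walkTuples 1, negMulLog (G.stationaryWalkWeight 1 a) =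
        G.stationaryWalkWeight 1 a * log (2 * #G.edgeFinset) := fun a ha => by
      have hd : (G.degree (a 1) : ℝ) ≠ 0 := by
        exact_mod_cast (degree_pos_of_mem_walkTuples ha).2.ne'
      rw [stationaryWalkWeight, stationaryWalkWeight, Fin.tail, Fin.succ_zero_eq_one,
        mul_div_assoc', inv_mul_cancel₀ hd, one_div, negMulLog, log_inv]
      ring
    rw [sum_congr rfl hq, ← sum_mul, sum_stationaryWalkWeight he]
    simp
  | succ k ih =>
    have hstep : ∀ b ∈ G.walkTuples (k + 1), ∑ x ∈ G.neighborFinset (b 0),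
        negMulLog (G.stationaryWalkWeight (k + 2) (Fin.cons x b)) =
          negMulLog (G.stationaryWalkWeight (k + 1) b) +
            G.stationaryWalkWeight (k + 1) b * log (G.degree (b 0)) := fun b hb => by
      simp_rw [stationaryWalkWeight_cons, sum_const, card_neighborFinset_eq_degree, nsmul_eq_mul]
      exact mul_negMulLog_inv_mul (by exact_mod_cast (degree_pos_of_mem_walkTuples hb).1.ne') _
    rw [sum_walkTuples_succ, sum_congr rfl hstep, sum_add_distrib, ih,
      sum_stationaryWalkWeight_mul (fun x => log (G.degree x))]
    push_cast
    ring

theorem pow_div_pow_le_card_walkTuples (he : #G.edgeFinset ≠ 0) (k : ℕ) :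
    (2 * #G.edgeFinset : ℝ) ^ (k + 1) / (Fintype.card V : ℝ) ^ k ≤ #(G.walkTuples (k + 1)) := by
  have hV := G.card_pos_of_card_edgeFinset_ne_zero he
  have hW : (G.walkTuples (k + 1)).Nonempty := nonempty_of_sum_ne_zero <| by
    rw [sum_stationaryWalkWeight he]
    exact one_ne_zero
  have hentropy := sum_negMulLog_le_log_card (fun a _ => stationaryWalkWeight_nonneg _ a)
    (sum_stationaryWalkWeight he (k + 1))
  rw [sum_negMulLog_stationaryWalkWeight he] at hentropy
  have hdeg := mul_le_mul_of_nonneg_left (G.log_sub_log_card_le_sum_mul_log_degree he)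
    (Nat.cast_nonneg (α := ℝ) k)
  rw [← log_le_log_iff (by positivity) (by exact_mod_cast hW.card_pos),
    log_div (by positivity) (by positivity), log_pow, log_pow]
  push_cast
  linarith

end SimpleGraph

theorem sum_walkCount {V : Type*} [Fintype V] (G : SimpleGraph V) (m : ℕ) (hm : 1 ≤ m) :
    (∑ x : V, ∑ y : V, walkCount G m x y) = pathHomCount G m ∧
    (2 * (G.edgeFinset.card : ℝ) / (Fintype.card V : ℝ) ^ 2) ^ m *
        (Fintype.card V : ℝ) ^ (m + 1) ≤ (pathHomCount G m : ℝ) := by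
  refine ⟨G.sum_sum_walkCount m, ?_⟩
  obtain ⟨k, rfl⟩ : ∃ k, m = k + 1 := ⟨m - 1, by omega⟩
  rcases eq_or_ne #G.edgeFinset 0 with he | he
  · simp [he]
  have hV := G.card_pos_of_card_edgeFinset_ne_zero he
  calc (2 * #G.edgeFinset / (Fintype.card V : ℝ) ^ 2) ^ (k + 1) * (Fintype.card V : ℝ) ^ (k + 2)
      = (2 * #G.edgeFinset : ℝ) ^ (k + 1) / (Fintype.card V : ℝ) ^ k := by
        rw [div_pow, div_mul_eq_mul_div, div_eq_div_iff (by positivity) (by positivity)]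
        ring
    _ ≤ #(G.walkTuples (k + 1)) := SimpleGraph.pow_div_pow_le_card_walkTuples he k
end

section
/- Let G be an (ε,d)-dense graph on n vertices with d > 0 and εn ≥ 1. Then G contains a triangle, provided n ≥ 2/(ε−ε²) and d³ > ε. -/
open Finset
open scoped Classical

theorem dense_contains_triangle {V : Type*} [Fintype V] (G : SimpleGraph V) (ε d : ℝ)
    (hε : 0 < ε) (hε1 : ε < 1) (hd0 : 0 < d) (hd1 : d ≤ 1)
    (hεn : 1 ≤ ε * (Fintype.card V : ℝ))
    (hn : 2 / (ε - ε ^ 2) ≤ (Fintype.card V : ℝ)) (hd3 : ε < d ^ 3)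
    (hG : IsEpsDense G ε d) :
    ∃ x y z : V, G.Adj x y ∧ G.Adj y z ∧ G.Adj x z := by
  classical
  have hn1 : (1:ℝ) ≤ (Fintype.card V : ℝ) := by
    calc (1:ℝ) ≤ ε * (Fintype.card V : ℝ) := hεn
    _ ≤ 1 * (Fintype.card V : ℝ) := by
        apply mul_le_mul_of_nonneg_right hε1.le
        positivity
    _ = _ := one_mul _
  -- Case split on whether some vertex has large degree
  by_cases hbig : ∃ v : V, ε * (Fintype.card V : ℝ) ≤ ((G.degree v : ℝ))
  · obtain ⟨v, hv⟩ := hbig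
    set X := G.neighborFinset v with hX
    have hcard : ε * (Fintype.card V : ℝ) ≤ (X.card : ℝ) := by
      rwa [hX, SimpleGraph.card_neighborFinset_eq_degree]
    have hXe := hG X hcard
    have hX1 : (1:ℝ) ≤ (X.card : ℝ) := le_trans hεn hcard
    have hpos : (0:ℝ) < (edgesIn G X : ℝ) := by
      have : (0:ℝ) < d / 2 * (X.card : ℝ) ^ 2 := by
        apply mul_pos (by linarith)
        nlinarith
      linarith
    have hne : (G.edgeFinset.filter (fun e => ∀ w ∈ e, w ∈ X)).Nonempty := by
      rw [← Finset.card_pos]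
      unfold edgesIn at hpos
      exact_mod_cast hpos
    obtain ⟨e, he⟩ := hne
    rw [Finset.mem_filter] at he
    obtain ⟨heE, heX⟩ := he
    induction e using Sym2.ind with
    | _ y z =>
      have hadj : G.Adj y z := by rwa [SimpleGraph.mem_edgeFinset, SimpleGraph.mem_edgeSet] at heE
      have hy : y ∈ X := heX y (Sym2.mem_mk_left y z)
      have hz : z ∈ X := heX z (Sym2.mem_mk_right y z)
      rw [hX, SimpleGraph.mem_neighborFinset] at hy hz
      exact ⟨v, y, z, hy, hadj, hz⟩
  · exfalso
    push_neg at hbig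
    have hVpos : 0 < Fintype.card V := by exact_mod_cast lt_of_lt_of_le zero_lt_one hn1
    have hV : Finset.univ.Nonempty := Finset.univ_nonempty_iff.mpr (Fintype.card_pos_iff.mp hVpos)
    -- density of the whole graph
    have hcardU : ε * (Fintype.card V : ℝ) ≤ ((Finset.univ : Finset V).card : ℝ) := by
      rw [Finset.card_univ]
      nlinarith
    have hUe := hG Finset.univ hcardU
    have hEcard : edgesIn G (Finset.univ : Finset V) = G.edgeFinset.card := by
      unfold edgesIn
      congr 1
      apply Finset.filter_true_of_mem
      intro e _
      intro w _
      exact Finset.mem_univ w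
    have hsum : ∑ v : V, G.degree v = 2 * G.edgeFinset.card := by
      simpa using G.sum_degrees_eq_twice_card_edges
    have hsumlt : (∑ v : V, (G.degree v : ℝ)) < (Fintype.card V : ℝ) * (ε * (Fintype.card V : ℝ)) := by
      calc (∑ v : V, (G.degree v : ℝ)) < ∑ _v : V, ε * (Fintype.card V : ℝ) :=
            Finset.sum_lt_sum_of_nonempty hV (fun v _ => hbig v)
      _ = (Fintype.card V : ℝ) * (ε * (Fintype.card V : ℝ)) := by
            rw [Finset.sum_const, Finset.card_univ, nsmul_eq_mul]
    have h2E : (2:ℝ) * (G.edgeFinset.card : ℝ) = ∑ v : V, (G.degree v : ℝ) := by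
      rw [← Nat.cast_sum]
      exact_mod_cast (hsum).symm
    have hdn : d * (Fintype.card V : ℝ) ^ 2 ≤ 2 * (G.edgeFinset.card : ℝ) := by
      rw [hEcard] at hUe
      rw [Finset.card_univ] at hUe
      linarith
    have hde : d < ε := by
      have hnn : (0:ℝ) < (Fintype.card V : ℝ) := by exact_mod_cast hVpos
      nlinarith
    nlinarith [mul_pos hd0 hd0, sq_nonneg d, sq_nonneg (d - 1)]
end
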